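/- The subspace Π(h) = {(D^L,D^R) ∈ Der^L(h) ⊕ Der^R(h) | D^L α + D^R α ∈ Δ(h) for all α ∈ h} is a sub-Leibniz algebra of the semidirect product (Der^L(h) ⊕ Der^R(h), [·,·]_s), where Δ(h) = span{[α,α]_h}. -/

import Mathlib

/-!
Closure of the derivation conditions under the bracket is a direct computation. For the
`Δ(h)` condition, `⁅D₁ᴸ, D₂ᴸ⁆ α + ⁅D₁ᴸ, D₂ᴿ⁆ α = D₁ᴸ (D₂ᴸ α + D₂ᴿ α) - (D₂ᴸ + D₂ᴿ) (D₁ᴸ α)`,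
and a left derivation preserves `Δ(h)` because it sends `[a, a]` to `[Da, a] + [a, Da]`,
which lies in `Δ(h)` by polarization.
-/

variable {K : Type*} [Field K] {h : Type*} [AddCommGroup h] [Module K h]

/-- `Δ(h) = span{[α,α]_h : α ∈ h}`. -/
def squaresSpan (B : h →ₗ[K] h →ₗ[K] h) : Submodule K h :=
  Submodule.span K {b : h | ∃ a : h, b = B a a}

/-- Membership in `Π(h) ⊆ Der^L(h) ⊕ Der^R(h)`: `DL` is a left derivation,
`DR` is a right derivation, and `DL α + DR α ∈ Δ(h)` for all `α`. -/
def InPi (B : h →ₗ[K] h →ₗ[K] h) (DL DR : Module.End K h) : Prop :=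
  (∀ a b : h, DL (B a b) = B (DL a) b + B a (DL b)) ∧
  (∀ a b : h, DR (B a b) = B a (DR b) - B b (DR a)) ∧
  (∀ α : h, DL α + DR α ∈ squaresSpan B)

section Derivation

variable {R M : Type*} [CommRing R] [AddCommGroup M] [Module R M]

def IsLeftDerivation (B : M →ₗ[R] M →ₗ[R] M) (D : Module.End R M) : Prop :=
  ∀ a b : M, D (B a b) = B (D a) b + B a (D b)

def IsRightDerivation (B : M →ₗ[R] M →ₗ[R] M) (D : Module.End R M) : Prop :=
  ∀ a b : M, D (B a b) = B a (D b) - B b (D a)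

variable {B : M →ₗ[R] M →ₗ[R] M} {D₁ D₂ : Module.End R M}

theorem IsLeftDerivation.lie (h₁ : IsLeftDerivation B D₁) (h₂ : IsLeftDerivation B D₂) :
    IsLeftDerivation B ⁅D₁, D₂⁆ := by
  intro a b
  simp only [Ring.lie_def, LinearMap.sub_apply, Module.End.mul_apply]
  rw [h₂, map_add, h₁, h₁, h₁ a b, map_add, h₂, h₂]
  simp only [map_sub, LinearMap.sub_apply]
  abel

theorem IsLeftDerivation.lie_isRightDerivation (h₁ : IsLeftDerivation B D₁)
    (h₂ : IsRightDerivation B D₂) : IsRightDerivation B ⁅D₁, D₂⁆ := by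
  intro a b
  simp only [Ring.lie_def, LinearMap.sub_apply, Module.End.mul_apply]
  rw [h₂, map_sub, h₁, h₁, h₁ a b, map_add, h₂, h₂]
  simp only [map_sub]
  abel

end Derivation

theorem add_flip_mem_squaresSpan (B : h →ₗ[K] h →ₗ[K] h) (x y : h) :
    B x y + B y x ∈ squaresSpan B := by
  have polarization : B x y + B y x = B (x + y) (x + y) - B x x - B y y := by
    simp only [map_add, LinearMap.add_apply]
    abel
  rw [polarization]
  refine sub_mem (sub_mem ?_ ?_) ?_ <;> exact Submodule.subset_span ⟨_, rfl⟩

theorem IsLeftDerivation.squaresSpan_le_comap {B : h →ₗ[K] h →ₗ[K] h} {D : Module.End K h}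
    (hD : IsLeftDerivation B D) : squaresSpan B ≤ (squaresSpan B).comap D := by
  refine Submodule.span_le.mpr ?_
  rintro _ ⟨a, rfl⟩
  change D (B a a) ∈ squaresSpan B
  rw [hD]
  exact add_flip_mem_squaresSpan B _ _

theorem Pi_sub_leibniz_general
    (B : h →ₗ[K] h →ₗ[K] h) :
    ∀ D1L D1R D2L D2R : Module.End K h,
      InPi B D1L D1R → InPi B D2L D2R → InPi B ⁅D1L, D2L⁆ ⁅D1L, D2R⁆ := by
  rintro D1L D1R D2L D2R ⟨h1L, -, -⟩ ⟨h2L, h2R, h2Δ⟩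
  refine ⟨IsLeftDerivation.lie h1L h2L, IsLeftDerivation.lie_isRightDerivation h1L h2R, ?_⟩
  intro α
  have bracket_sum : ⁅D1L, D2L⁆ α + ⁅D1L, D2R⁆ α
      = D1L (D2L α + D2R α) - (D2L (D1L α) + D2R (D1L α)) := by
    simp only [Ring.lie_def, LinearMap.sub_apply, Module.End.mul_apply, map_add]
    abel
  rw [bracket_sum]
  exact sub_mem (IsLeftDerivation.squaresSpan_le_comap h1L (h2Δ α)) (h2Δ (D1L α))

/-- Proposition 3.6: `Π(h)` is a sub-Leibniz algebra of the semidirect product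
`(Der^L(h) ⊕ Der^R(h), [·,·]_s)`, i.e. it is closed under the bracket
`[(D^L₁,D^R₁),(D^L₂,D^R₂)]_s = (⁅D^L₁,D^L₂⁆, ⁅D^L₁,D^R₂⁆)`. -/
theorem Pi_sub_leibniz
    (B : h →ₗ[K] h →ₗ[K] h)
    (hleib : ∀ a b c : h, B a (B b c) = B (B a b) c + B b (B a c)) :
    ∀ D1L D1R D2L D2R : Module.End K h,
      InPi B D1L D1R → InPi B D2L D2R → InPi B ⁅D1L, D2L⁆ ⁅D1L, D2R⁆ :=
  Pi_sub_leibniz_general B
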